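/- arXiv:2505.08461 — 4 statements merged into one kernel-verified Lean document; each statement's English description precedes it below -/
import Mathlib

section
/- Let w_T : ℝ^d → ℝ^d be the vector field w_T(x) = (1/(d+2)) · (b_T^NC(x) − 2λ_0(x) + 2/d) · ∑_{i=1}^d λ_i(x) (v_i − v_0). Then w_T is differentiable and div w_T(x) = b_T^NC(x) for every x ∈ ℝ^d. -/
/-!
Since the barycentric coordinates sum to one, `∑_{i ≥ 1} λ_i(x) (v_i - v_0) = x - v_0`, so
`w_T(x) = g(x) (x - v_0)` with `g = (b_T^NC - 2 λ_0 + 2/d) / (d + 2)`, and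
`div w_T(x) = d g(x) + Dg(x)(x - v_0)`. Along `x - v_0` each `λ_i` has slope `λ_i(x) - δ_{i0}`,
so the directional derivative is a polynomial in the `λ_i(x)`; in `d g + Dg(x)(x - v_0)` the
terms in `λ_0` cancel and `(d + 2)(2 - (d + 1) ∑ λ_i²) / (d + 2)` remains.
-/

open MeasureTheory Finset

noncomputable section

noncomputable def divg {d : ℕ} (w : EuclideanSpace ℝ (Fin d) → EuclideanSpace ℝ (Fin d))
    (x : EuclideanSpace ℝ (Fin d)) : ℝ :=
  ∑ i, fderiv ℝ w x (EuclideanSpace.single i 1) i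

noncomputable def bNC {d : ℕ} (L : Fin (d + 1) → (EuclideanSpace ℝ (Fin d) →ᵃ[ℝ] ℝ))
    (x : EuclideanSpace ℝ (Fin d)) : ℝ :=
  2 - ((d : ℝ) + 1) * ∑ i, (L i x) ^ 2

theorem AffineMap.hasFDerivAt_of_finiteDimensional {E F : Type*} [NormedAddCommGroup E]
    [NormedSpace ℝ E] [FiniteDimensional ℝ E] [NormedAddCommGroup F] [NormedSpace ℝ F]
    (A : E →ᵃ[ℝ] F) (x : E) : HasFDerivAt A A.linear.toContinuousLinearMap x :=
  (ContinuousAffineMap.mk A A.continuous_of_finiteDimensional).hasFDerivAt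

theorem EuclideanSpace.sum_mul_map_single {ι : Type*} [Fintype ι] [DecidableEq ι]
    (φ : EuclideanSpace ℝ ι →L[ℝ] ℝ) (y : EuclideanSpace ℝ ι) :
    ∑ k, y k * φ (EuclideanSpace.single k 1) = φ y := by
  conv_rhs => rw [← (EuclideanSpace.basisFun ι ℝ).sum_repr y]
  simp

theorem divg_smul_sub {d : ℕ} {g : EuclideanSpace ℝ (Fin d) → ℝ}
    {g' : EuclideanSpace ℝ (Fin d) →L[ℝ] ℝ} {x : EuclideanSpace ℝ (Fin d)}
    (hg : HasFDerivAt g g' x) (a : EuclideanSpace ℝ (Fin d)) :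
    divg (fun y => g y • (y - a)) x = d * g x + g' (x - a) := by
  have hw : HasFDerivAt (fun y => g y • (y - a)) _ x :=
    hg.smul ((hasFDerivAt_id x).sub_const a)
  rw [divg, hw.fderiv, ← EuclideanSpace.sum_mul_map_single g']
  simp [Finset.sum_add_distrib, mul_comm]

theorem sum_erase_smul_vsub_eq_vsub {ι k V P : Type*} [Ring k] [AddCommGroup V] [Module k V]
    [AddTorsor V P] [Fintype ι] [DecidableEq ι] {v : ι → P}
    (hspan : affineSpan k (Set.range v) = ⊤) {L : ι → P →ᵃ[k] k}
    (hL : ∀ i j, L i (v j) = if i = j then 1 else 0) (i₀ : ι) (x : P) :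
    ∑ i ∈ univ.erase i₀, L i x • (v i -ᵥ v i₀) = x -ᵥ v i₀ := by
  obtain ⟨w, hw, rfl⟩ := eq_affineCombination_of_mem_affineSpan_of_fintype
    (hspan ▸ AffineSubspace.mem_top k V x)
  have hLw : ∀ i, L i (univ.affineCombination k v w) = w i := fun i => by
    rw [univ.map_affineCombination _ _ hw, univ.affineCombination_eq_linear_combination _ _ hw]
    simp [hL]
  simp only [hLw]
  rw [sum_erase _ (by simp),
    univ.affineCombination_eq_weightedVSubOfPoint_vadd_of_sum_eq_one _ _ hw (v i₀),
    vadd_vsub, weightedVSubOfPoint_apply]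

theorem hasFDerivAt_bNC {d : ℕ} (L : Fin (d + 1) → (EuclideanSpace ℝ (Fin d) →ᵃ[ℝ] ℝ))
    (x : EuclideanSpace ℝ (Fin d)) :
    HasFDerivAt (bNC L)
      (-(((d : ℝ) + 1) • ∑ i, (2 * L i x) • (L i).linear.toContinuousLinearMap)) x := by
  have hsq : ∀ i, HasFDerivAt (fun y => L i y ^ 2)
      ((2 * L i x) • (L i).linear.toContinuousLinearMap) x := fun i => by
    simpa using ((L i).hasFDerivAt_of_finiteDimensional x).pow 2
  exact ((HasFDerivAt.fun_sum fun i _ => hsq i).const_mul _).const_sub 2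

/-- with `w_T(x) = (1/(d+2))(b_T^NC(x) - 2λ₀(x) + 2/d) ∑_{i=1}^d λᵢ(x)(vᵢ - v₀)`,
the field `w_T` is differentiable and `div w_T = b_T^NC` everywhere. -/
theorem stmt0 (d : ℕ) (hd : 2 ≤ d)
    (v : Fin (d + 1) → EuclideanSpace ℝ (Fin d))
    (hv : AffineIndependent ℝ v)
    (L : Fin (d + 1) → (EuclideanSpace ℝ (Fin d) →ᵃ[ℝ] ℝ))
    (hL : ∀ i j, L i (v j) = if i = j then 1 else 0)
    (wT : EuclideanSpace ℝ (Fin d) → EuclideanSpace ℝ (Fin d))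
    (hwT : ∀ x, wT x = ((1 : ℝ) / ((d : ℝ) + 2)) •
      ((bNC L x - 2 * L 0 x + 2 / (d : ℝ)) •
        ∑ i ∈ Finset.univ.erase (0 : Fin (d + 1)), L i x • (v i - v 0))) :
    Differentiable ℝ wT ∧ ∀ x, divg wT x = bNC L x := by
  have hd0 : (d : ℝ) ≠ 0 := by exact_mod_cast (by omega : d ≠ 0)
  have hspan : affineSpan ℝ (Set.range v) = ⊤ :=
    hv.affineSpan_eq_top_iff_card_eq_finrank_add_one.mpr (by simp)
  have hu : ∀ y, ∑ i ∈ univ.erase 0, L i y • (v i - v 0) = y - v 0 :=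
    sum_erase_smul_vsub_eq_vsub hspan hL 0
  set g := fun y => 1 / ((d : ℝ) + 2) * (bNC L y - 2 * L 0 y + 2 / (d : ℝ)) with hg_def
  have hwT' : wT = fun y => g y • (y - v 0) := funext fun y => by rw [hwT, hu, smul_smul]
  have hg : ∀ x, HasFDerivAt g ((1 / ((d : ℝ) + 2)) •
      (-(((d : ℝ) + 1) • ∑ i, (2 * L i x) • (L i).linear.toContinuousLinearMap)
        - (2 : ℝ) • (L 0).linear.toContinuousLinearMap)) x := fun x =>
    (((hasFDerivAt_bNC L x).fun_sub
      (((L 0).hasFDerivAt_of_finiteDimensional x).const_mul 2)).add_const _).const_mul _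
  refine ⟨?_, fun x => ?_⟩
  · rw [hwT']
    exact fun x => (hg x).differentiableAt.smul (differentiableAt_id.sub_const _)
  have hdir : ∀ i, (L i).linear (x - v 0) = L i x - if i = 0 then 1 else 0 := fun i => by
    rw [← vsub_eq_sub, AffineMap.linearMap_vsub, hL, vsub_eq_sub]
  have hsum : ∑ i, 2 * L i x * (L i x - if i = 0 then 1 else 0)
      = 2 * ∑ i, L i x ^ 2 - 2 * L 0 x := by
    simp [mul_sub, Finset.sum_sub_distrib, Finset.mul_sum, sq, mul_assoc]
  rw [hwT', divg_smul_sub (hg x)]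
  simp only [hg_def, one_div, bNC, smul_apply, sub_apply, neg_apply, _root_.sum_apply,
    LinearMap.coe_toContinuousLinearMap', hdir, smul_eq_mul, hsum, ↓reduceIte]
  field_simp
  ring
end
end

section
/- Let n ≥ 2 be an integer and let A, B be real n × n matrices such that A is skew-symmetric, B is symmetric positive semidefinite, and rank B ≥ n − 1. If AB + BA = 0, then A = 0. -/
open Matrix

noncomputable section

/-- if `A` is skew-symmetric, `B` is symmetric positive semidefinite with
`rank B ≥ n - 1`, and `AB + BA = 0`, then `A = 0`. -/
theorem stmt4 (n : ℕ) (hn : 2 ≤ n) (A B : Matrix (Fin n) (Fin n) ℝ)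
    (hA : Aᵀ = -A) (hB : B.PosSemidef) (hrank : n - 1 ≤ B.rank)
    (hAB : A * B + B * A = 0) : A = 0 := by
  classical
  have hH : B.IsHermitian := hB.1
  set U : Matrix (Fin n) (Fin n) ℝ := (hH.eigenvectorUnitary : Matrix (Fin n) (Fin n) ℝ) with hU
  set l : Fin n → ℝ := hH.eigenvalues with hl
  have hUU : star U * U = 1 := Unitary.coe_star_mul_self hH.eigenvectorUnitary
  have hUU' : U * star U = 1 := Unitary.coe_mul_star_self hH.eigenvectorUnitary
  have hL : ∀ X : Matrix (Fin n) (Fin n) ℝ, star U * (U * X) = X := fun X => by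
    rw [← Matrix.mul_assoc, hUU, Matrix.one_mul]
  have hR : ∀ X : Matrix (Fin n) (Fin n) ℝ, U * (star U * X) = X := fun X => by
    rw [← Matrix.mul_assoc, hUU', Matrix.one_mul]
  have hspec : B = U * diagonal l * star U := by
    have := hH.spectral_theorem
    simpa using this
  -- eigenvalues nonneg
  have hnonneg : ∀ i, 0 ≤ l i := hB.eigenvalues_nonneg
  -- at most one zero eigenvalue
  have hzero : ∀ i j : Fin n, l i = 0 → l j = 0 → i = j := by
    intro i j hi hj
    by_contra hij
    have hcard : Fintype.card {i // l i ≠ 0} = B.rank := (hH.rank_eq_card_non_zero_eigs).symm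
    have hle : B.rank ≤ n := by simpa using B.rank_le_card_width
    have hcompl : Fintype.card {i // ¬ l i = 0} =
        Fintype.card (Fin n) - Fintype.card {i // l i = 0} :=
      Fintype.card_subtype_compl _
    have hle0 : Fintype.card {i // l i = 0} ≤ Fintype.card (Fin n) :=
      Fintype.card_subtype_le _
    have h2 : 2 ≤ Fintype.card {i // l i = 0} := by
      have hcard2 : ({⟨i, hi⟩, ⟨j, hj⟩} : Finset {i // l i = 0}).card = 2 := by
        rw [Finset.card_insert_of_notMem, Finset.card_singleton]
        simp [Subtype.ext_iff, hij]
      calc 2 = ({⟨i, hi⟩, ⟨j, hj⟩} : Finset {i // l i = 0}).card := hcard2.symm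
        _ ≤ Fintype.card {i // l i = 0} := Finset.card_le_univ _
    have hcn : Fintype.card (Fin n) = n := Fintype.card_fin n
    have : Fintype.card {i // ¬ l i = 0} = Fintype.card {i // l i ≠ 0} := rfl
    omega
  -- skewness of M
  set M : Matrix (Fin n) (Fin n) ℝ := star U * A * U with hM
  have hstarU : star U = Uᵀ := by
    ext i j; simp [Matrix.star_apply]
  have hMskew : Mᵀ = -M := by
    rw [hM, hstarU, Matrix.transpose_mul, Matrix.transpose_mul, Matrix.transpose_transpose, hA]
    simp only [Matrix.neg_mul, Matrix.mul_neg, Matrix.mul_assoc]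
  -- commutation relation for M
  have hMD : M * diagonal l + diagonal l * M = 0 := by
    have h1 : star U * (A * B + B * A) * U = 0 := by rw [hAB]; simp
    rw [hspec] at h1
    have e1 : star U * (A * (U * diagonal l * star U)) * U = M * diagonal l := by
      rw [hM]
      simp only [Matrix.mul_assoc, hUU, Matrix.mul_one]
    have e2 : star U * (U * diagonal l * star U * A) * U = diagonal l * M := by
      rw [hM]
      simp only [Matrix.mul_assoc]
      rw [hL]
    rw [Matrix.mul_add, Matrix.add_mul, e1, e2] at h1
    exact h1
  -- conclude M = 0
  have hM0 : M = 0 := by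
    ext i j
    have hij : M i j * l j + l i * M i j = 0 := by
      have := congrFun (congrFun hMD i) j
      simpa [Matrix.add_apply, Matrix.mul_diagonal, Matrix.diagonal_mul] using this
    by_cases h : i = j
    · subst h
      have h2 := congrFun (congrFun hMskew i) i
      simp only [Matrix.transpose_apply, Matrix.neg_apply] at h2
      simpa [Matrix.zero_apply] using by linarith
    · have hsum : l i + l j ≠ 0 := by
        intro h0
        have hi0 : l i = 0 := le_antisymm (by linarith [hnonneg j]) (hnonneg i)
        have hj0 : l j = 0 := by linarith
        exact h (hzero i j hi0 hj0)
      have hfac : M i j * (l i + l j) = 0 := by linear_combination hij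
      simp only [Matrix.zero_apply]
      exact (mul_eq_zero.mp hfac).resolve_right hsum
  -- conclude A = 0
  have hAeq : A = U * M * star U := by
    rw [hM]
    calc A = A * (U * star U) := by rw [hUU', Matrix.mul_one]
      _ = U * (star U * (A * (U * star U))) := by rw [hR]
      _ = U * (star U * A * U) * star U := by simp only [Matrix.mul_assoc]
  rw [hAeq, hM0]
  simp
end
end

section
/- Let A = (a_{ij})_{0≤i,j≤d} be a skew-symmetric real (d+1) × (d+1) matrix, and define v : ℝ^d → ℝ^d by v(x) = ∑_{i=0}^d ∑_{j=0}^d a_{ij} λ_i(x) λ_j(x) (v_j − v_i). Then div v(x) = 2 ∑_{i=0}^d (∑_{j=0}^d a_{ij}) λ_i(x) for all x; in particular, div v ≡ 0 if and only if every row sum of A vanishes, i.e., ∑_{j=0}^d a_{ij} = 0 for i = 0, 1, …, d. -/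
open Matrix Finset

noncomputable section

/-! The field is a sum of terms `(aᵢⱼ λᵢ λⱼ) • (vⱼ - vᵢ)`. For a constant vector `u`, the
divergence of `f • u` is the directional derivative `Df(u)`, and since the `λₖ` are affine with
`λₖ(vⱼ) - λₖ(vᵢ) = δₖⱼ - δₖᵢ`, the `(i, j)` term contributes `aᵢⱼ (λᵢ - λⱼ)`. Skew-symmetry turns
`∑ᵢⱼ aᵢⱼ (λᵢ - λⱼ)` into `2 ∑ᵢ (∑ⱼ aᵢⱼ) λᵢ`, and evaluating at the vertex `vₖ`, where
`λ = eₖ`, isolates the `k`-th row sum. -/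

theorem Matrix.sum_sum_mul_sub_of_transpose_eq_neg {n R : Type*} [Fintype n] [CommRing R]
    {a : Matrix n n R} (ha : aᵀ = -a) (c : n → R) :
    ∑ i, ∑ j, a i j * (c i - c j) = 2 * ∑ i, (∑ j, a i j) * c i := by
  have hswap : ∑ i, ∑ j, a i j * c j = -∑ i, ∑ j, a i j * c i := by
    rw [Finset.sum_comm, ← Finset.sum_neg_distrib]
    refine Finset.sum_congr rfl fun i _ => ?_
    rw [← Finset.sum_neg_distrib]
    refine Finset.sum_congr rfl fun j _ => ?_
    rw [← neg_mul, ← Matrix.neg_apply, ← ha, Matrix.transpose_apply]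
  simp only [mul_sub, Finset.sum_sub_distrib, hswap, Finset.sum_mul]
  ring

section FiniteDimensional

variable {E F : Type*} [NormedAddCommGroup E] [NormedSpace ℝ E] [FiniteDimensional ℝ E]
  [NormedAddCommGroup F] [NormedSpace ℝ F]

theorem AffineMap.hasFDerivAt_of_finiteDimensional_s6 (g : E →ᵃ[ℝ] F) (x : E) :
    HasFDerivAt g g.linear.toContinuousLinearMap x :=
  (⟨g, AffineMap.continuous_linear_iff.mp (LinearMap.continuous_of_finiteDimensional _)⟩ :
    E →ᴬ[ℝ] F).hasFDerivAt

theorem hasFDerivAt_const_mul_mul_affineMap (c : ℝ) (f g : E →ᵃ[ℝ] ℝ) (x : E) :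
    HasFDerivAt (fun y => c * (f y * g y))
      (c • (f x • g.linear.toContinuousLinearMap + g x • f.linear.toContinuousLinearMap)) x :=
  ((f.hasFDerivAt_of_finiteDimensional_s6 x).fun_mul
    (g.hasFDerivAt_of_finiteDimensional_s6 x)).const_mul c

end FiniteDimensional

section Divergence

variable {d : ℕ} {x : EuclideanSpace ℝ (Fin d)}

theorem divg_fun_sum {ι : Type*} (s : Finset ι)
    {w : ι → EuclideanSpace ℝ (Fin d) → EuclideanSpace ℝ (Fin d)}
    (hw : ∀ i ∈ s, DifferentiableAt ℝ (w i) x) :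
    divg (fun y => ∑ i ∈ s, w i y) x = ∑ i ∈ s, divg (w i) x := by
  simp only [divg, fderiv_fun_sum hw, _root_.sum_apply, WithLp.ofLp_sum, Finset.sum_apply]
  exact Finset.sum_comm

theorem divg_smul_const {f : EuclideanSpace ℝ (Fin d) → ℝ} (hf : DifferentiableAt ℝ f x)
    (u : EuclideanSpace ℝ (Fin d)) :
    divg (fun y => f y • u) x = fderiv ℝ f x u := by
  simp only [divg, fderiv_smul_const hf, ContinuousLinearMap.smulRight_apply, PiLp.smul_apply,
    smul_eq_mul]
  conv_rhs => rw [← (EuclideanSpace.basisFun (Fin d) ℝ).sum_repr u]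
  simp [mul_comm]

theorem divg_const_mul_mul_affineMap_smul_sub (c : ℝ) (f g : EuclideanSpace ℝ (Fin d) →ᵃ[ℝ] ℝ)
    (p q : EuclideanSpace ℝ (Fin d)) :
    divg (fun y => (c * (f y * g y)) • (q - p)) x =
      c * (f x * (g q - g p) + g x * (f q - f p)) := by
  have hfg := hasFDerivAt_const_mul_mul_affineMap c f g x
  rw [divg_smul_const hfg.differentiableAt, hfg.fderiv]
  simp only [_root_.smul_apply, _root_.add_apply, LinearMap.coe_toContinuousLinearMap',
    smul_eq_mul, ← vsub_eq_sub, AffineMap.linearMap_vsub]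

theorem divg_sum_sum_const_mul_mul_affineMap_smul_sub {ι : Type*} [Fintype ι] (c : Matrix ι ι ℝ)
    (f : ι → EuclideanSpace ℝ (Fin d) →ᵃ[ℝ] ℝ) (p : ι → EuclideanSpace ℝ (Fin d)) :
    divg (fun y => ∑ i, ∑ j, (c i j * (f i y * f j y)) • (p j - p i)) x =
      ∑ i, ∑ j, c i j * (f i x * (f j (p j) - f j (p i)) + f j x * (f i (p j) - f i (p i))) := by
  have hterm (i j : ι) : DifferentiableAt ℝ (fun y => (c i j * (f i y * f j y)) • (p j - p i)) x :=
    (hasFDerivAt_const_mul_mul_affineMap _ _ _ x).differentiableAt.smul_const _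
  rw [divg_fun_sum _ fun i _ => DifferentiableAt.fun_sum fun j _ => hterm i j]
  refine Finset.sum_congr rfl fun i _ => ?_
  rw [divg_fun_sum _ fun j _ => hterm i j]
  exact Finset.sum_congr rfl fun j _ => divg_const_mul_mul_affineMap_smul_sub _ _ _ _ _

end Divergence

theorem stmt6_general (d : ℕ)
    (v : Fin (d + 1) → EuclideanSpace ℝ (Fin d))
    (L : Fin (d + 1) → (EuclideanSpace ℝ (Fin d) →ᵃ[ℝ] ℝ))
    (hL : ∀ i j, L i (v j) = if i = j then 1 else 0)
    (a : Matrix (Fin (d + 1)) (Fin (d + 1)) ℝ) (ha : aᵀ = -a)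
    (w : EuclideanSpace ℝ (Fin d) → EuclideanSpace ℝ (Fin d))
    (hw : ∀ x, w x = ∑ i, ∑ j, (a i j * (L i x * L j x)) • (v j - v i)) :
    (∀ x, divg w x = 2 * ∑ i, (∑ j, a i j) * L i x) ∧
      ((∀ x, divg w x = 0) ↔ ∀ i, ∑ j, a i j = 0) := by
  have hdiv (x : EuclideanSpace ℝ (Fin d)) : divg w x = 2 * ∑ i, (∑ j, a i j) * L i x := by
    have hbary (i j : Fin (d + 1)) :
        L i x * (L j (v j) - L j (v i)) + L j x * (L i (v j) - L i (v i)) = L i x - L j x := by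
      obtain rfl | hij := eq_or_ne i j
      · ring
      · simp only [hL, ↓reduceIte, if_neg hij, if_neg hij.symm]
        ring
    rw [funext hw, divg_sum_sum_const_mul_mul_affineMap_smul_sub]
    simp only [hbary]
    exact a.sum_sum_mul_sub_of_transpose_eq_neg ha _
  have hvertex (k : Fin (d + 1)) : ∑ i, (∑ j, a i j) * L i (v k) = ∑ j, a k j := by
    simp [hL]
  refine ⟨hdiv, fun h k => ?_, fun h x => by simp [hdiv, h]⟩
  simpa [hdiv, hvertex] using h (v k)

/-- for a skew-symmetric `(d+1)×(d+1)` matrix `a` and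
`w(x) = ∑ᵢ∑ⱼ aᵢⱼ λᵢ(x) λⱼ(x) (vⱼ - vᵢ)`, one has
`div w(x) = 2 ∑ᵢ (∑ⱼ aᵢⱼ) λᵢ(x)`; in particular `div w ≡ 0` iff all row sums of `a` vanish. -/
theorem stmt6 (d : ℕ) (hd : 2 ≤ d)
    (v : Fin (d + 1) → EuclideanSpace ℝ (Fin d))
    (hv : AffineIndependent ℝ v)
    (L : Fin (d + 1) → (EuclideanSpace ℝ (Fin d) →ᵃ[ℝ] ℝ))
    (hL : ∀ i j, L i (v j) = if i = j then 1 else 0)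
    (a : Matrix (Fin (d + 1)) (Fin (d + 1)) ℝ) (ha : aᵀ = -a)
    (w : EuclideanSpace ℝ (Fin d) → EuclideanSpace ℝ (Fin d))
    (hw : ∀ x, w x = ∑ i, ∑ j, (a i j * (L i x * L j x)) • (v j - v i)) :
    (∀ x, divg w x = 2 * ∑ i, (∑ j, a i j) * L i x) ∧
      ((∀ x, divg w x = 0) ↔ ∀ i, ∑ j, a i j = 0) :=
  stmt6_general d v L hL a ha w hw
end
end

section
/- If ℓ : ℝ^d → ℝ is an affine function and ∫_{F_i} ℓ dH^{d−1} = 0 for every i = 0, …, d, then ℓ = 0. -/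
/-!
On a nondegenerate simplex `T = conv{b₀, …, bₙ}` in an `n`-dimensional space with a Haar
measure, an affine `g` integrates to `vol T / (n + 1) * ∑ g (bᵢ)`: indeed `g = ∑ g (bᵢ) λᵢ`,
and all barycentric coordinates `λᵢ` have the same integral, because the affine map
exchanging two vertices preserves `T` and therefore the measure. Each facet `F_i` is such a
simplex for the `(d - 1)`-dimensional Hausdorff measure, so the hypothesis gives
`∑_{j ≠ i} ℓ (v_j) = 0` for all `i`. Hence every `ℓ (v_i)` equals `S = ∑_j ℓ (v_j)`, so
`S = (d + 1) S`, `S = 0`, and `ℓ` vanishes on the vertices, hence everywhere.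
-/

open MeasureTheory

noncomputable section

/-- The facet `F_i = {x ∈ T : λᵢ(x) = 0}` of the simplex `T = conv{v₀,…,v_d}`. -/
def facet {d : ℕ} (v : Fin (d + 1) → EuclideanSpace ℝ (Fin d))
    (L : Fin (d + 1) → (EuclideanSpace ℝ (Fin d) →ᵃ[ℝ] ℝ)) (i : Fin (d + 1)) :
    Set (EuclideanSpace ℝ (Fin d)) :=
  {x ∈ convexHull ℝ (Set.range v) | L i x = 0}

open Set

section Affine

variable {ι k V P : Type*} [Ring k] [AddCommGroup V] [Module k V] [AddTorsor V P]

theorem AffineBasis.exists_affineEquiv_apply_eq (b b' : AffineBasis ι k P) :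
    ∃ σ : P ≃ᵃ[k] P, ∀ i, σ (b i) = b' i := by
  obtain ⟨j⟩ := b.nonempty
  let A : V ≃ₗ[k] V := (b.basisOf j).equiv (b'.basisOf j) (Equiv.refl _)
  refine ⟨((AffineEquiv.vaddConst k (b j)).symm.trans A.toAffineEquiv).trans
    (AffineEquiv.vaddConst k (b' j)), fun i => ?_⟩
  by_cases hij : i = j
  · subst hij
    simp
  · have hA := (b.basisOf j).equiv_apply (i := ⟨i, hij⟩) (b'.basisOf j) (Equiv.refl _)
    simp only [AffineBasis.basisOf_apply, Equiv.refl_apply] at hA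
    simp [A, hA]

theorem AffineBasis.coord_comp_eq_of_apply_eq (b : AffineBasis ι k P) (σ : P ≃ᵃ[k] P)
    (π : Equiv.Perm ι) (hσ : ∀ i, σ (b i) = b (π i)) (j : ι) :
    (b.coord j).comp σ.toAffineMap = b.coord (π.symm j) := by
  classical
  refine AffineMap.ext_on b.tot ?_
  rintro _ ⟨i, rfl⟩
  simp only [AffineMap.coe_comp, Function.comp_apply, AffineEquiv.coe_toAffineMap, hσ,
    b.coord_apply]
  rw [Equiv.symm_apply_eq]

theorem AffineBasis.apply_eq_sum_coord_mul [Fintype ι] (b : AffineBasis ι k P)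
    (g : P →ᵃ[k] k) (x : P) : g x = ∑ i, b.coord i x * g (b i) := by
  conv_lhs => rw [← b.affineCombination_coord_eq_self x]
  rw [Finset.map_affineCombination _ _ _ (b.sum_coord_apply_eq_one x),
    Finset.affineCombination_eq_linear_combination _ _ _ (b.sum_coord_apply_eq_one x)]
  simp

end Affine

theorem AffineMap.sep_convexHull_eq_convexHull_sep {E : Type*} [AddCommGroup E] [Module ℝ E]
    (f : E →ᵃ[ℝ] ℝ) {s : Set E} (hf : ∀ x ∈ s, 0 ≤ f x) :
    {x ∈ convexHull ℝ s | f x = 0} = convexHull ℝ {x ∈ s | f x = 0} := by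
  classical
  refine Subset.antisymm ?_ fun x hx => ⟨convexHull_mono (sep_subset _ _) hx, ?_⟩
  · rintro _ ⟨hx, hfx⟩
    rw [convexHull_eq] at hx
    obtain ⟨ι, t, w, z, hw₀, hw₁, hz, rfl⟩ := hx
    rw [← affineCombination_eq_centerMass hw₁, Finset.map_affineCombination _ _ _ hw₁,
      Finset.affineCombination_eq_linear_combination _ _ _ hw₁] at hfx
    have hterm := (Finset.sum_eq_zero_iff_of_nonneg fun i hi =>
      mul_nonneg (hw₀ i hi) (hf _ (hz i hi))).1 hfx
    rw [← Finset.centerMass_filter_ne_zero]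
    refine Finset.centerMass_mem_convexHull _ (fun i hi => hw₀ i (Finset.mem_filter.1 hi).1)
      ?_ fun i hi => ?_
    · rw [Finset.sum_filter_ne_zero, hw₁]; exact zero_lt_one
    · obtain ⟨hit, hwi⟩ := Finset.mem_filter.1 hi
      exact ⟨hz i hit, (mul_eq_zero.1 (hterm i hit)).resolve_left hwi⟩
  · exact convexHull_min (fun y hy => hy.2)
      ((convex_singleton (0 : ℝ)).affine_preimage f) hx

theorem AffineBasis.measure_convexHull_pos {ι E : Type*} [Fintype ι] [NormedAddCommGroup E]
    [NormedSpace ℝ E] [MeasurableSpace E] (μ : Measure E) [μ.IsOpenPosMeasure]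
    (b : AffineBasis ι ℝ E) : 0 < μ (convexHull ℝ (range b)) :=
  (isOpen_interior.measure_pos μ ⟨_, b.centroid_mem_interior_convexHull⟩).trans_le
    (measure_mono interior_subset)

section Haar

variable {E : Type*} [NormedAddCommGroup E] [NormedSpace ℝ E] [FiniteDimensional ℝ E]
  [MeasurableSpace E] [BorelSpace E] (μ : Measure E) [μ.IsAddHaarMeasure]

theorem AffineEquiv.map_addHaar (σ : E ≃ᵃ[ℝ] E) :
    μ.map σ = ENNReal.ofReal |(LinearMap.det σ.linear.toLinearMap)⁻¹| • μ := by
  have hdet : LinearMap.det σ.linear.toLinearMap ≠ 0 := (LinearEquiv.isUnit_det' _).ne_zero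
  have hσ : ⇑σ = (fun y => σ 0 + y) ∘ σ.linear.toLinearMap := by
    ext x
    simpa [add_comm] using σ.map_vadd 0 x
  rw [hσ, ← Measure.map_map (measurable_const_add _)
      σ.linear.toLinearMap.continuous_of_finiteDimensional.measurable,
    Measure.map_linearMap_addHaar_eq_smul_addHaar μ hdet, Measure.map_smul,
    (measurePreserving_add_left μ (σ 0)).map_eq]

theorem AffineEquiv.measurePreserving_of_image_eq (σ : E ≃ᵃ[ℝ] E) {s : Set E}
    (hs : MeasurableSet s) (hσs : σ '' s = s) (h₀ : μ s ≠ 0) (hfin : μ s ≠ ⊤) :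
    MeasurePreserving σ μ μ := by
  have hmeas : Measurable σ := σ.toAffineMap.continuous_of_finiteDimensional.measurable
  have hpre : σ ⁻¹' s = s := by
    conv_lhs => rw [← hσs]
    exact preimage_image_eq s σ.injective
  have hμs := congrArg (· s) (σ.map_addHaar μ)
  simp only [Measure.map_apply hmeas hs, hpre, Measure.smul_apply, smul_eq_mul] at hμs
  have hdet := (ENNReal.mul_eq_right h₀ hfin).1 hμs.symm
  exact ⟨hmeas, by rw [σ.map_addHaar μ, hdet, one_smul]⟩

section Simplex

variable {ι : Type*} [Fintype ι] (b : AffineBasis ι ℝ E)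

theorem AffineBasis.integrableOn_convexHull (g : E →ᵃ[ℝ] ℝ) :
    IntegrableOn g (convexHull ℝ (range b)) μ :=
  g.continuous_of_finiteDimensional.continuousOn.integrableOn_compact
    ((finite_range b).isCompact_convexHull (𝕜 := ℝ))

/-- The affine equivalence exchanging the vertices `b i` and `b j` maps the simplex onto itself,
hence preserves `μ`, and it exchanges the barycentric coordinates `i` and `j`. -/

theorem AffineBasis.setIntegral_coord_convexHull_eq_coord (i j : ι) :
    ∫ x in convexHull ℝ (range b), b.coord i x ∂μ =
      ∫ x in convexHull ℝ (range b), b.coord j x ∂μ := by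
  classical
  set T := convexHull ℝ (range b)
  obtain ⟨σ, hσ⟩ := b.exists_affineEquiv_apply_eq (b.reindex (Equiv.swap i j))
  simp only [AffineBasis.reindex_apply, Equiv.symm_swap] at hσ
  have hT : IsCompact T := (finite_range b).isCompact_convexHull (𝕜 := ℝ)
  have hσT : σ '' T = T := by
    rw [← AffineEquiv.coe_toAffineMap, AffineMap.image_convexHull, ← range_comp,
      show ⇑σ.toAffineMap ∘ b = b ∘ Equiv.swap i j from funext hσ, EquivLike.range_comp]
  have hpre : σ ⁻¹' T = T := by
    conv_lhs => rw [← hσT]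
    exact preimage_image_eq T σ.injective
  have hσμ := σ.measurePreserving_of_image_eq μ hT.isClosed.measurableSet hσT
    (b.measure_convexHull_pos μ).ne' hT.measure_lt_top.ne
  have hcoord := b.coord_comp_eq_of_apply_eq σ (Equiv.swap i j) hσ i
  rw [Equiv.symm_swap, Equiv.swap_apply_left] at hcoord
  calc ∫ x in T, b.coord i x ∂μ = ∫ x in σ ⁻¹' T, b.coord i (σ x) ∂μ :=
        (hσμ.setIntegral_preimage_emb
          (AffineEquiv.toContinuousAffineEquiv σ).toHomeomorph.measurableEmbedding _ _).symm
    _ = ∫ x in T, b.coord j x ∂μ := by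
        rw [hpre, ← hcoord]
        rfl

theorem AffineBasis.setIntegral_coord_convexHull (i : ι) :
    ∫ x in convexHull ℝ (range b), b.coord i x ∂μ =
      μ.real (convexHull ℝ (range b)) / Fintype.card ι := by
  have hsum : ∑ j, ∫ x in convexHull ℝ (range b), b.coord j x ∂μ =
      μ.real (convexHull ℝ (range b)) := by
    rw [← integral_finsetSum _ fun j _ => b.integrableOn_convexHull μ (b.coord j)]
    simp [b.sum_coord_apply_eq_one]
  rw [Finset.sum_congr rfl fun j _ => b.setIntegral_coord_convexHull_eq_coord μ j i,
    Finset.sum_const, Finset.card_univ, nsmul_eq_mul] at hsum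
  have hcard : (0 : ℝ) < Fintype.card ι := by
    have := b.nonempty
    exact_mod_cast Fintype.card_pos
  rw [← hsum, mul_div_cancel_left₀ _ hcard.ne']

theorem AffineBasis.setIntegral_convexHull (g : E →ᵃ[ℝ] ℝ) :
    ∫ x in convexHull ℝ (range b), g x ∂μ =
      μ.real (convexHull ℝ (range b)) / Fintype.card ι * ∑ i, g (b i) := by
  rw [integral_congr_ae (ae_of_all _ (b.apply_eq_sum_coord_mul g)),
    integral_finsetSum _ fun i _ => (b.integrableOn_convexHull μ (b.coord i)).mul_const _]
  simp_rw [integral_mul_const, b.setIntegral_coord_convexHull μ]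
  rw [Finset.mul_sum]

theorem AffineBasis.sum_eq_zero_of_setIntegral_convexHull_eq_zero (g : E →ᵃ[ℝ] ℝ)
    (hg : ∫ x in convexHull ℝ (range b), g x ∂μ = 0) : ∑ i, g (b i) = 0 := by
  rw [b.setIntegral_convexHull μ g] at hg
  refine (mul_eq_zero.1 hg).resolve_left (div_ne_zero ?_ (Nat.cast_ne_zero.2 ?_))
  · exact (ENNReal.toReal_pos (b.measure_convexHull_pos μ).ne'
      ((finite_range b).isCompact_convexHull (𝕜 := ℝ)).measure_lt_top.ne).ne'
  · have := b.nonempty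
    exact Fintype.card_ne_zero

end Simplex

end Haar

theorem Isometry.setIntegral_image_hausdorffMeasure {X Y F : Type*} [EMetricSpace X]
    [CompleteSpace X] [MeasurableSpace X] [BorelSpace X] [EMetricSpace Y] [MeasurableSpace Y]
    [BorelSpace Y] [NormedAddCommGroup F] [NormedSpace ℝ F] {f : X → Y} (hf : Isometry f)
    {d : ℝ} (hd : 0 ≤ d) (s : Set X) (g : Y → F) :
    ∫ y in f '' s, g y ∂μH[d] = ∫ x in s, g (f x) ∂μH[d] := by
  have hmp : MeasurePreserving f μH[d] (μH[d].restrict (range f)) :=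
    ⟨hf.continuous.measurable, hf.map_hausdorffMeasure (.inl hd)⟩
  rw [← hmp.setIntegral_image_emb hf.isClosedEmbedding.measurableEmbedding,
    Measure.restrict_restrict_of_subset (image_subset_range f s)]

/-- The simplex is the isometric image, under `v ↦ v + w i₀`, of a full-dimensional simplex
in its direction space `V`, on which `μH[k]` is a Haar measure because `finrank ℝ V = k`. -/
theorem AffineIndependent.sum_eq_zero_of_setIntegral_convexHull_eq_zero {ι E : Type*}
    [Fintype ι] [NormedAddCommGroup E] [NormedSpace ℝ E] [MeasurableSpace E] [BorelSpace E]
    {w : ι → E} (hw : AffineIndependent ℝ w) {k : ℕ} (hk : Fintype.card ι = k + 1)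
    (g : E →ᵃ[ℝ] ℝ) (hg : ∫ x in convexHull ℝ (range w), g x ∂μH[k] = 0) :
    ∑ i, g (w i) = 0 := by
  obtain ⟨i₀⟩ : Nonempty ι := Fintype.card_pos_iff.1 (by omega)
  set V := vectorSpan ℝ (range w)
  have hV : Module.finrank ℝ V = k := hw.finrank_vectorSpan hk
  let φ : V →ᵃ[ℝ] E :=
    (AffineEquiv.vaddConst ℝ (w i₀)).toAffineMap.comp V.subtype.toAffineMap
  have hφ : Isometry φ := Isometry.of_dist_eq fun x y => by
    simp [φ, dist_add_right, Subtype.dist_eq]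
  let w' : ι → V := fun i =>
    ⟨w i -ᵥ w i₀, vsub_mem_vectorSpan ℝ (mem_range_self i) (mem_range_self i₀)⟩
  have hφw' : φ ∘ w' = w := funext fun i => vsub_vadd (w i) (w i₀)
  have hw' : AffineIndependent ℝ w' := AffineIndependent.of_comp φ (hφw' ▸ hw)
  let b : AffineBasis ι ℝ V :=
    ⟨w', hw', hw'.affineSpan_eq_top_iff_card_eq_finrank_add_one.2 (by rw [hV, hk])⟩
  have himage : φ '' convexHull ℝ (range w') = convexHull ℝ (range w) := by
    rw [AffineMap.image_convexHull, ← range_comp, hφw']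
  have : (μH[k] : Measure V).IsAddHaarMeasure := by rw [← hV]; infer_instance
  rw [← himage, hφ.setIntegral_image_hausdorffMeasure (Nat.cast_nonneg k)] at hg
  rw [← hφw']
  exact b.sum_eq_zero_of_setIntegral_convexHull_eq_zero μH[k] (g.comp φ) hg

theorem Fin.eq_zero_of_sum_succAbove_eq_zero {K : Type*} [Field K] [CharZero K] {n : ℕ}
    {a : Fin (n + 2) → K} (h : ∀ i : Fin (n + 2), ∑ j, a (i.succAbove j) = 0) : a = 0 := by
  have ha : ∀ i, a i = ∑ j, a j := fun i => by
    rw [Fin.sum_univ_succAbove a i, h i, add_zero]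
  have hsum : (n + 1 : K) * ∑ j, a j = 0 := by
    have := Finset.sum_congr rfl fun i (_ : i ∈ Finset.univ) => ha i
    rw [Finset.sum_const, Finset.card_univ, Fintype.card_fin, nsmul_eq_mul] at this
    push_cast at this
    linear_combination -this
  funext i
  rw [ha i, Pi.zero_apply]
  exact (mul_eq_zero.1 hsum).resolve_left (Nat.cast_add_one_ne_zero n)

theorem facet_eq_convexHull {d : ℕ} (v : Fin (d + 1) → EuclideanSpace ℝ (Fin d))
    (L : Fin (d + 1) → (EuclideanSpace ℝ (Fin d) →ᵃ[ℝ] ℝ))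
    (hL : ∀ i j, L i (v j) = if i = j then 1 else 0) (i : Fin (d + 1)) :
    facet v L i = convexHull ℝ (range (v ∘ i.succAbove)) := by
  rw [facet, AffineMap.sep_convexHull_eq_convexHull_sep]
  · congr 1
    ext x
    constructor
    · rintro ⟨⟨j, rfl⟩, hj⟩
      obtain ⟨m, rfl⟩ := Fin.exists_succAbove_eq (show j ≠ i by rintro rfl; simp [hL] at hj)
      exact ⟨m, rfl⟩
    · rintro ⟨m, rfl⟩
      exact ⟨mem_range_self _, by simp [hL, (Fin.succAbove_ne i m).symm]⟩
  · rintro _ ⟨j, rfl⟩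
    rw [hL]
    split_ifs <;> norm_num

/-- an affine function with vanishing integral over every facet of the simplex
vanishes identically. -/
theorem stmt11 (d : ℕ) (hd : 2 ≤ d)
    (v : Fin (d + 1) → EuclideanSpace ℝ (Fin d))
    (hv : AffineIndependent ℝ v)
    (L : Fin (d + 1) → (EuclideanSpace ℝ (Fin d) →ᵃ[ℝ] ℝ))
    (hL : ∀ i j, L i (v j) = if i = j then 1 else 0)
    (ℓ : EuclideanSpace ℝ (Fin d) →ᵃ[ℝ] ℝ)
    (hℓ : ∀ i, ∫ x in facet v L i, ℓ x ∂(μH[(d : ℝ) - 1]) = 0) :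
    ℓ = 0 := by
  obtain ⟨n, rfl⟩ : ∃ n, d = n + 1 := ⟨d - 1, by omega⟩
  have hfacet : ∀ i : Fin (n + 2), ∑ j, ℓ (v (i.succAbove j)) = 0 := fun i =>
    (hv.comp_embedding i.succAboveEmb).sum_eq_zero_of_setIntegral_convexHull_eq_zero
      (Fintype.card_fin _) ℓ (by simpa [facet_eq_convexHull v L hL i] using hℓ i)
  have hvert := Fin.eq_zero_of_sum_succAbove_eq_zero (a := fun j => ℓ (v j)) hfacet
  refine AffineMap.ext_on (hv.affineSpan_eq_top_iff_card_eq_finrank_add_one.2 (by simp)) ?_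
  rintro _ ⟨i, rfl⟩
  exact congrFun hvert i
end
end
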